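/- If ρ_a < ρ and ρ_a < 1/(|s|·a_1), then A is unbounded on the interval (0, ρ_a): for every real M there exists x with 0 < x < ρ_a and A(x) > M. -/

import Mathlib

open scoped BigOperators ENNReal NNReal

/-- The radius of convergence of the power series with real coefficients `c`. -/
noncomputable def seriesRadius (c : ℕ → ℝ) : ℝ≥0∞ :=
  ⨆ (r : ℝ≥0) (_ : Summable fun n => |c n| * (r : ℝ) ^ n), (r : ℝ≥0∞)

/-!
With `w(n,j) = (|s| j - sign s) / C(n,j)` the recursion reads
`a_n = f_n + ∑_{0<j<n} w(n,j) a_j a_{n-j}`, where `f_n = p(n)/n!`. The weight of `a_1 a_{n-1}` is at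
most `|s|`, while all others are `O(1/n)`. So for large `n` the recursion is the linear one
`a_n ≈ f_n + |s| a_1 a_{n-1}` up to a small quadratic perturbation, and a bound on the partial sums
of `a_n x^n` can be bootstrapped as long as `|s| a_1 x < 1`, `f(x)` converges and the first few
terms are controlled.

If `A` were bounded on `(0, ρ_a)`, monotone convergence would make `A(ρ_a)` finite. Since
`|s| a_1 ρ_a < 1` and `f` converges beyond `ρ_a`, the bootstrap then runs at some `x > ρ_a`,
contradicting the definition of `ρ_a`; the bootstrap also runs from `ρ_a = 0`, which rules that
case out.
-/

open Finset Filter Topology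
open scoped Nat

theorem Nat.choose_le_choose_of_le_of_le_sub {n k j : ℕ} (hkj : k ≤ j) (hjn : j ≤ n - k) :
    n.choose k ≤ n.choose j := by
  have up_to_half : ∀ i, k ≤ i → i ≤ n / 2 → n.choose k ≤ n.choose i := by
    intro i hki hi
    induction i, hki using Nat.le_induction with
    | base => exact le_rfl
    | succ i _ ih => exact (ih (by omega)).trans (Nat.choose_le_succ_of_lt_half_left (by omega))
  rcases le_or_gt j (n / 2) with h | h
  · exact up_to_half j hkj h
  · rw [← Nat.choose_symm (by omega : j ≤ n)]
    exact up_to_half _ (by omega) (by omega)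

theorem Int.abs_sign_le_abs (s : ℤ) : |s.sign| ≤ |s| := by
  rcases eq_or_ne s 0 with rfl | hs
  · simp
  · rw [Int.abs_sign_of_ne_zero hs]
    exact Int.one_le_abs hs

theorem mul_lt_one_of_ofReal_lt_inv {r y : ℝ} (hr : 0 ≤ r)
    (h : ENNReal.ofReal r < (ENNReal.ofReal y)⁻¹) : y * r < 1 := by
  rw [← one_div, ENNReal.lt_div_iff_mul_lt (Or.inr ENNReal.ofReal_ne_top)
    (Or.inl ENNReal.ofReal_ne_top), ← ENNReal.ofReal_mul hr, ENNReal.ofReal_lt_one] at h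
  linarith

section seriesRadius

variable {c : ℕ → ℝ} {x : ℝ}

theorem ofReal_le_seriesRadius (hx : 0 ≤ x) (h : Summable fun n => |c n| * x ^ n) :
    ENNReal.ofReal x ≤ seriesRadius c :=
  le_iSup₂_of_le (f := fun (r : ℝ≥0) (_ : Summable fun n => |c n| * (r : ℝ) ^ n) => (r : ℝ≥0∞))
    x.toNNReal (by simpa [Real.coe_toNNReal x hx] using h) le_rfl

theorem exists_gt_summable_of_lt_seriesRadius (h : ENNReal.ofReal x < seriesRadius c) :
    ∃ y, x < y ∧ Summable fun n => |c n| * y ^ n := by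
  obtain ⟨r, hr⟩ := lt_iSup_iff.1 h
  obtain ⟨hsum, hxr⟩ := lt_iSup_iff.1 hr
  exact ⟨r, (Real.le_coe_toNNReal x).trans_lt (mod_cast ENNReal.coe_lt_coe.1 hxr), hsum⟩

theorem summable_of_lt_seriesRadius (hx : 0 ≤ x) (h : ENNReal.ofReal x < seriesRadius c) :
    Summable fun n => |c n| * x ^ n := by
  obtain ⟨y, hxy, hy⟩ := exists_gt_summable_of_lt_seriesRadius h
  exact hy.of_nonneg_of_le (fun n => by positivity) fun n => by gcongr

end seriesRadius

noncomputable def quadConv (w : ℕ → ℕ → ℝ) (b : ℕ → ℝ) (n : ℕ) : ℝ :=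
  ∑ j ∈ Ico 1 n, w n j * b j * b (n - j)

section quadConv

variable {w : ℕ → ℕ → ℝ}

theorem quadConv_mul_pow (b : ℕ → ℝ) (x : ℝ) (n : ℕ) :
    quadConv w (fun k => b k * x ^ k) n = quadConv w b n * x ^ n := by
  rw [quadConv, quadConv, sum_mul]
  refine sum_congr rfl fun j hj => ?_
  rw [← Nat.add_sub_of_le (mem_Ico.1 hj).2.le, pow_add, Nat.add_sub_cancel_left]
  ring

theorem nonneg_of_eq_add_quadConv {q b : ℕ → ℝ} (hq : ∀ n, 0 ≤ q n)
    (hw : ∀ n j, 1 ≤ j → 0 ≤ w n j) (hb0 : 0 ≤ b 0)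
    (hrec : ∀ n, 1 ≤ n → b n = q n + quadConv w b n) (n : ℕ) : 0 ≤ b n := by
  induction n using Nat.strong_induction_on with
  | _ n ih =>
    rcases Nat.eq_zero_or_pos n with rfl | hn
    · exact hb0
    rw [hrec n hn]
    refine add_nonneg (hq n) (sum_nonneg fun j hj => ?_)
    obtain ⟨hj1, hjn⟩ := mem_Ico.1 hj
    have := hw n j hj1
    have := ih j hjn
    have := ih (n - j) (by omega)
    positivity

theorem quadConv_le {c : ℕ → ℝ} {n : ℕ} {α ε : ℝ} (hc : ∀ n, 0 ≤ c n) (hε : 0 ≤ ε) (hn : 2 ≤ n)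
    (htop : w n (n - 1) ≤ α) (hmid : ∀ j, 1 ≤ j → j + 1 < n → w n j ≤ ε) :
    quadConv w c n ≤ α * c 1 * c (n - 1) + ε * ∑ j ∈ Ico 1 n, c j * c (n - j) := by
  obtain ⟨m, rfl⟩ : ∃ m, n = m + 1 := ⟨n - 1, by omega⟩
  rw [quadConv, sum_Ico_succ_top (by omega : 1 ≤ m), Nat.add_sub_cancel,
    show m + 1 - m = 1 by omega]
  rw [Nat.add_sub_cancel] at htop
  have hfirst : ∑ j ∈ Ico 1 m, w (m + 1) j * c j * c (m + 1 - j)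
      ≤ ε * ∑ j ∈ Ico 1 (m + 1), c j * c (m + 1 - j) := by
    calc _ ≤ ∑ j ∈ Ico 1 m, ε * (c j * c (m + 1 - j)) := by
          refine sum_le_sum fun j hj => ?_
          obtain ⟨hj1, hjm⟩ := mem_Ico.1 hj
          rw [mul_assoc]
          exact mul_le_mul_of_nonneg_right (hmid j hj1 (by omega)) (mul_nonneg (hc _) (hc _))
      _ ≤ ε * ∑ j ∈ Ico 1 (m + 1), c j * c (m + 1 - j) := by
          rw [← mul_sum]
          exact mul_le_mul_of_nonneg_left (sum_le_sum_of_subset_of_nonneg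
            (Ico_subset_Ico_right (by omega)) fun j _ _ => mul_nonneg (hc _) (hc _)) hε
  have hlast : w (m + 1) m * c m * c 1 ≤ α * c 1 * c m := by
    rw [mul_right_comm α]
    gcongr
    exacts [hc _, hc _]
  linarith

end quadConv

/-- `(α j - β) j! (n - j)! / n!`: for `α = |s|`, `β = sign s` this is the weight of
`a_j a_{n-j}` in the recursion for `a_n = γ_{1,n} / n!`. -/
noncomputable def recWeight (α β : ℝ) (n j : ℕ) : ℝ :=
  (α * j - β) / n.choose j

section recWeight

variable {α β : ℝ} {n j : ℕ}

theorem recWeight_nonneg (hβ : |β| ≤ α) (hj : 1 ≤ j) : 0 ≤ recWeight α β n j := by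
  have : α ≤ α * j := le_mul_of_one_le_right ((abs_nonneg β).trans hβ) (mod_cast hj)
  exact div_nonneg (by linarith [le_abs_self β]) (Nat.cast_nonneg _)

theorem mul_sub_le_mul_add_one (hβ : |β| ≤ α) (j : ℕ) : α * j - β ≤ α * (j + 1) := by
  linarith [neg_abs_le β]

theorem recWeight_sub_one_le (hβ : |β| ≤ α) (hn : 2 ≤ n) : recWeight α β n (n - 1) ≤ α := by
  have hchoose : n.choose (n - 1) = n := by
    rw [Nat.choose_symm (by omega), Nat.choose_one_right]
  have hn' : (0 : ℝ) < n := by positivity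
  rw [recWeight, hchoose, div_le_iff₀ hn']
  have := mul_sub_le_mul_add_one hβ (n - 1)
  push_cast [Nat.cast_sub (by omega : 1 ≤ n)] at this ⊢
  linarith

theorem recWeight_le_two_mul_div (hβ : |β| ≤ α) (hj : 1 ≤ j) (hjn : j + 1 < n) :
    recWeight α β n j ≤ 2 * α / n := by
  have hα : 0 ≤ α := (abs_nonneg β).trans hβ
  have hn : (0 : ℝ) < n := Nat.cast_pos.2 (by omega)
  rcases hj.eq_or_lt with rfl | hj2
  · rw [recWeight, Nat.choose_one_right, Nat.cast_one]
    gcongr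
    linarith [mul_sub_le_mul_add_one hβ 1]
  · have hchoose : (n * (n - 1) / 2 : ℝ) ≤ n.choose j := by
      rw [← Nat.cast_choose_two]
      exact_mod_cast Nat.choose_le_choose_of_le_of_le_sub (by omega) (by omega)
    have hn1 : (j : ℝ) + 1 ≤ n - 1 := by
      have : ((j + 2 : ℕ) : ℝ) ≤ n := mod_cast (by omega : j + 2 ≤ n)
      push_cast at this; linarith
    have hpos : (0 : ℝ) < n * (n - 1) / 2 := by
      have : (1 : ℝ) < n := by exact_mod_cast (by omega : 1 < n)
      nlinarith
    calc recWeight α β n j ≤ α * (n - 1) / (n * (n - 1) / 2) := by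
          exact div_le_div₀ (by nlinarith) ((mul_sub_le_mul_add_one hβ j).trans (by gcongr))
            hpos hchoose
      _ = 2 * α / n := by
          have : (n : ℝ) - 1 ≠ 0 := by nlinarith
          field_simp

theorem coeff_eq_add_quadConv {p γ a : ℕ → ℝ}
    (hγ : ∀ n, 1 ≤ n → γ n = p n + ∑ j ∈ Ico 1 n, (α * j - β) * γ j * γ (n - j))
    (ha : ∀ n, a n = if n = 0 then 0 else γ n / n !) (hn : 1 ≤ n) :
    a n = p n / n ! + quadConv (recWeight α β) a n := by
  have hγa : ∀ j, 1 ≤ j → γ j = a j * j ! := fun j hj => by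
    rw [ha, if_neg (by omega), div_mul_cancel₀ _ (by positivity)]
  rw [ha, if_neg (by omega), hγ n hn, add_div, sum_div, quadConv]
  congr 1
  refine sum_congr rfl fun j hj => ?_
  obtain ⟨hj1, hjn⟩ := mem_Ico.1 hj
  rw [hγa j hj1, hγa (n - j) (by omega), recWeight, Nat.cast_choose ℝ hjn.le]
  field_simp

end recWeight

theorem sum_range_sum_Ico_mul_sub_le_sq {c : ℕ → ℝ} (hc : ∀ n, 0 ≤ c n) (N : ℕ) :
    ∑ n ∈ range (N + 1), ∑ j ∈ Ico 1 n, c j * c (n - j) ≤ (∑ k ∈ range N, c k) ^ 2 := by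
  rw [sq, sum_mul_sum, ← sum_product', sum_sigma']
  set e : (_ : ℕ) × ℕ → ℕ × ℕ := fun x => (x.2, x.1 - x.2)
  have he : Set.InjOn e ((range (N + 1)).sigma fun n => Ico 1 n) := by
    rintro ⟨n, j⟩ h ⟨n', j'⟩ h' hee
    simp only [coe_sigma, Set.mem_sigma_iff, coe_range, Set.mem_Iio, coe_Ico, Set.mem_Ico] at h h'
    simp only [e, Prod.mk.injEq] at hee
    obtain rfl : n = n' := by omega
    obtain rfl := hee.1
    rfl
  refine (sum_image (f := fun y => c y.1 * c y.2) he).symm.trans_le <|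
    sum_le_sum_of_subset_of_nonneg ?_ fun _ _ _ => mul_nonneg (hc _) (hc _)
  intro x hx
  simp only [mem_image, mem_sigma, mem_range, mem_Ico, e] at hx
  obtain ⟨⟨n, j⟩, hnj, rfl⟩ := hx
  simp only [mem_product, mem_range] at hnj ⊢
  omega

theorem le_two_mul_div_of_quadratic_step {P : ℕ → ℝ} {K θ ε : ℝ} (hP : ∀ N, 0 ≤ P N) (hθ : 0 ≤ θ)
    (hθ1 : θ < 1) (hε : 0 ≤ ε) (hsmall : 4 * ε * K ≤ (1 - θ) ^ 2)
    (h0 : P 0 ≤ 2 * K / (1 - θ)) (hstep : ∀ N, P (N + 1) ≤ K + θ * P N + ε * P N ^ 2)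
    (N : ℕ) : P N ≤ 2 * K / (1 - θ) := by
  set B := 2 * K / (1 - θ)
  have h1θ : 0 < 1 - θ := by linarith
  have hBK : (1 - θ) * B = 2 * K := by simp only [B]; field_simp
  have hK : 0 ≤ K := by nlinarith [mul_nonneg h1θ.le ((hP 0).trans h0)]
  -- with `B = 2K/(1-θ)` the fixed-point inequality reduces to `4εK ≤ (1-θ)²`
  have hB : K + θ * B + ε * B ^ 2 ≤ B := by
    have hεB : ε * B ^ 2 ≤ K := by
      have : ε * B ^ 2 = 4 * ε * K * K / (1 - θ) ^ 2 := by simp only [B]; field_simp; ring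
      rw [this, div_le_iff₀ (by positivity)]
      nlinarith
    nlinarith
  induction N with
  | zero => exact h0
  | succ N ih =>
    calc P (N + 1) ≤ K + θ * P N + ε * P N ^ 2 := hstep N
      _ ≤ K + θ * B + ε * B ^ 2 := by gcongr; exact hP N
      _ ≤ B := hB

section recursiveBound

variable {c r : ℕ → ℝ} {n₀ : ℕ} {H θ ε : ℝ}

theorem sum_range_succ_le_of_recursive_bound (hc : ∀ n, 0 ≤ c n) (hr : ∀ n, 0 ≤ r n)
    (hrs : Summable r) (hθ : 0 ≤ θ) (hε : 0 ≤ ε) (hhead : ∑ n ∈ range (n₀ + 1), c n ≤ H)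
    (hrec : ∀ n, n₀ < n → c n ≤ r n + θ * c (n - 1) + ε * ∑ j ∈ Ico 1 n, c j * c (n - j))
    (N : ℕ) :
    ∑ n ∈ range (N + 1), c n
      ≤ (H + ∑' n, r n) + θ * ∑ n ∈ range N, c n + ε * (∑ n ∈ range N, c n) ^ 2 := by
  set P := ∑ n ∈ range N, c n
  have hP : 0 ≤ P := sum_nonneg fun n _ => hc n
  have hr0 : 0 ≤ ∑' n, r n := tsum_nonneg hr
  have hrest : 0 ≤ θ * P + ε * P ^ 2 := by positivity
  rcases le_or_gt N n₀ with hN | hN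
  · have : ∑ n ∈ range (N + 1), c n ≤ ∑ n ∈ range (n₀ + 1), c n :=
      sum_le_sum_of_subset_of_nonneg (range_subset_range.2 (by omega)) fun n _ _ => hc n
    linarith
  have hshift : ∑ n ∈ Ico (n₀ + 1) (N + 1), c (n - 1) ≤ P := by
    rw [← sum_Ico_add' (fun n => c (n - 1)) n₀ N 1]
    simp only [Nat.add_sub_cancel]
    exact sum_le_sum_of_subset_of_nonneg (fun n hn => mem_range.2 (mem_Ico.1 hn).2)
      fun n _ _ => hc n
  have hconv : ∑ n ∈ Ico (n₀ + 1) (N + 1), ∑ j ∈ Ico 1 n, c j * c (n - j) ≤ P ^ 2 :=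
    (sum_le_sum_of_subset_of_nonneg (fun n hn => mem_range.2 (mem_Ico.1 hn).2)
      fun n _ _ => sum_nonneg fun j _ => mul_nonneg (hc _) (hc _)).trans
      (sum_range_sum_Ico_mul_sub_le_sq hc N)
  have htail : ∑ n ∈ Ico (n₀ + 1) (N + 1), c n ≤ ∑' n, r n + θ * P + ε * P ^ 2 :=
    calc ∑ n ∈ Ico (n₀ + 1) (N + 1), c n
        ≤ ∑ n ∈ Ico (n₀ + 1) (N + 1),
            (r n + θ * c (n - 1) + ε * ∑ j ∈ Ico 1 n, c j * c (n - j)) :=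
          sum_le_sum fun n hn => hrec n (by have := (mem_Ico.1 hn).1; omega)
      _ = ∑ n ∈ Ico (n₀ + 1) (N + 1), r n + θ * ∑ n ∈ Ico (n₀ + 1) (N + 1), c (n - 1)
            + ε * ∑ n ∈ Ico (n₀ + 1) (N + 1), ∑ j ∈ Ico 1 n, c j * c (n - j) := by
          rw [sum_add_distrib, sum_add_distrib, mul_sum, mul_sum]
      _ ≤ ∑' n, r n + θ * P + ε * P ^ 2 := by
          gcongr
          exact hrs.sum_le_tsum _ fun n _ => hr n
  rw [← sum_range_add_sum_Ico c (by omega : n₀ + 1 ≤ N + 1)]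
  linarith

theorem summable_of_recursive_bound (hc : ∀ n, 0 ≤ c n) (hr : ∀ n, 0 ≤ r n)
    (hrs : Summable r) (hθ : 0 ≤ θ) (hθ1 : θ < 1) (hε : 0 ≤ ε)
    (hhead : ∑ n ∈ range (n₀ + 1), c n ≤ H) (hsmall : 4 * ε * (H + ∑' n, r n) ≤ (1 - θ) ^ 2)
    (hrec : ∀ n, n₀ < n → c n ≤ r n + θ * c (n - 1) + ε * ∑ j ∈ Ico 1 n, c j * c (n - j)) :
    Summable c := by
  have hH : 0 ≤ H := (sum_nonneg fun n _ => hc n).trans hhead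
  have h0 : ∑ n ∈ range 0, c n ≤ 2 * (H + ∑' n, r n) / (1 - θ) := by
    have : 0 ≤ ∑' n, r n := tsum_nonneg hr
    rw [sum_range_zero]
    exact div_nonneg (by linarith) (by linarith)
  exact summable_of_sum_range_le hc <| le_two_mul_div_of_quadratic_step
    (fun N => sum_nonneg fun n _ => hc n) hθ hθ1 hε hsmall h0
    (sum_range_succ_le_of_recursive_bound hc hr hrs hθ hε hhead hrec)

end recursiveBound

theorem summable_mul_pow_of_tsum_le {c : ℕ → ℝ} {r M : ℝ} (hc : ∀ n, 0 ≤ c n) (hr : 0 ≤ r)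
    (hsum : ∀ x, 0 < x → x < r → Summable fun n => c n * x ^ n)
    (hM : ∀ x, 0 < x → x < r → ∑' n, c n * x ^ n ≤ M) :
    Summable fun n => c n * r ^ n := by
  rcases hr.eq_or_lt with rfl | hr
  · exact (hasSum_single 0 fun n hn => by simp [hn]).summable
  refine summable_of_sum_range_le (c := M) (fun n => mul_nonneg (hc n) (pow_nonneg hr.le n))
    fun N => ?_
  have hcont : Continuous fun x : ℝ => ∑ n ∈ range N, c n * x ^ n := by fun_prop
  refine le_of_tendsto ((hcont.tendsto r).mono_left (nhdsWithin_le_nhds (s := Set.Iio r))) ?_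
  filter_upwards [Ioo_mem_nhdsLT hr] with x ⟨hx, hxr⟩
  exact ((hsum x hx hxr).sum_le_tsum _ fun n _ => mul_nonneg (hc n) (pow_nonneg hx.le n)).trans
    (hM x hx hxr)

theorem mul_pow_le_of_le_add_quadConv {w : ℕ → ℕ → ℝ} {q b : ℕ → ℝ} {α ε θ x R : ℝ} {n : ℕ}
    (hb : ∀ n, 0 ≤ b n) (hq : 0 ≤ q n) (hε : 0 ≤ ε) (hn : 2 ≤ n)
    (hbn : b n ≤ q n + quadConv w b n) (htop : w n (n - 1) ≤ α)
    (hmid : ∀ j, 1 ≤ j → j + 1 < n → w n j ≤ ε) (hx : 0 ≤ x) (hxR : x ≤ R)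
    (hθ : α * b 1 * x ≤ θ) :
    b n * x ^ n ≤ q n * R ^ n + θ * (b (n - 1) * x ^ (n - 1))
      + ε * ∑ j ∈ Ico 1 n, b j * x ^ j * (b (n - j) * x ^ (n - j)) := by
  set c : ℕ → ℝ := fun n => b n * x ^ n
  have hc : ∀ n, 0 ≤ c n := fun n => mul_nonneg (hb n) (pow_nonneg hx n)
  calc c n ≤ q n * x ^ n + quadConv w c n := by
        rw [quadConv_mul_pow, ← add_mul]
        exact mul_le_mul_of_nonneg_right hbn (pow_nonneg hx n)
    _ ≤ q n * R ^ n + (α * c 1 * c (n - 1) + ε * ∑ j ∈ Ico 1 n, c j * c (n - j)) :=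
        add_le_add (mul_le_mul_of_nonneg_left (pow_le_pow_left₀ hx hxR n) hq)
          (quadConv_le hc hε hn htop hmid)
    _ ≤ q n * R ^ n + θ * c (n - 1) + ε * ∑ j ∈ Ico 1 n, c j * c (n - j) := by
        rw [← add_assoc]
        gcongr
        · exact hc _
        · simp only [c, pow_one, ← mul_assoc]
          exact hθ

theorem exists_gt_summable_mul_pow {w : ℕ → ℕ → ℝ} {α C : ℝ} {q b : ℕ → ℝ}
    (hα : 0 ≤ α) (hC : 0 ≤ C) (hw : ∀ n, 2 ≤ n → w n (n - 1) ≤ α)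
    (hwC : ∀ n j, 1 ≤ j → j + 1 < n → w n j ≤ C / n)
    (hq : ∀ n, 0 ≤ q n) (hb : ∀ n, 0 ≤ b n) (hrec : ∀ n, 1 ≤ n → b n ≤ q n + quadConv w b n)
    {r R : ℝ} (hr : 0 ≤ r) (hrR : r < R) (hbr : Summable fun n => b n * r ^ n)
    (hqR : Summable fun n => q n * R ^ n) (hlin : α * b 1 * r < 1) :
    ∃ x, r < x ∧ Summable fun n => b n * x ^ n := by
  set θ := (1 + α * b 1 * r) / 2
  have hθ : 0 ≤ θ := by have := hb 1; positivity
  have hθ1 : θ < 1 := by simp only [θ]; linarith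
  set H := ∑' n, b n * r ^ n + 1
  set F := ∑' n, q n * R ^ n
  have hHF : 0 < H + F := by
    have : 0 ≤ ∑' n, b n * r ^ n := tsum_nonneg fun n => mul_nonneg (hb n) (pow_nonneg hr n)
    have : 0 ≤ F := tsum_nonneg fun n => mul_nonneg (hq n) (pow_nonneg (hr.trans hrR.le) n)
    linarith
  -- beyond `n₀` all weights but the one of `b_1 b_{n-1}` are at most `C / n₀`
  obtain ⟨n₀, hn₀⟩ := exists_nat_gt (4 * C * (H + F) / (1 - θ) ^ 2)
  have hn₀pos : (0 : ℝ) < n₀ := (by positivity : 0 ≤ 4 * C * (H + F) / (1 - θ) ^ 2).trans_lt hn₀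
  have hsmall : 4 * (C / n₀) * (H + F) ≤ (1 - θ) ^ 2 := by
    rw [div_lt_iff₀ (by nlinarith)] at hn₀
    rw [mul_div_assoc', div_mul_eq_mul_div, div_le_iff₀ hn₀pos]
    linarith
  have hnear : ∀ᶠ x in 𝓝 r, x < R ∧ α * b 1 * x < θ ∧
      ∑ n ∈ range (n₀ + 1), b n * x ^ n < ∑ n ∈ range (n₀ + 1), b n * r ^ n + 1 :=
    (eventually_lt_nhds hrR).and <| (ContinuousAt.eventually_lt (by fun_prop) (by fun_prop)
      (by simp only [θ]; linarith)).and
      (ContinuousAt.eventually_lt (by fun_prop) (by fun_prop) (by linarith))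
  obtain ⟨x, ⟨hxR, hxθ, hxhead⟩, hrx⟩ :=
    ((hnear.filter_mono nhdsWithin_le_nhds).and (self_mem_nhdsWithin (s := Set.Ioi r))).exists
  have hx : 0 ≤ x := hr.trans (le_of_lt hrx)
  refine ⟨x, hrx, summable_of_recursive_bound (n₀ := n₀) (θ := θ)
    (fun n => mul_nonneg (hb n) (pow_nonneg hx n))
    (fun n => mul_nonneg (hq n) (pow_nonneg (hx.trans hxR.le) n)) hqR hθ hθ1
    (by positivity) (hxhead.le.trans ?_) hsmall fun n hn => ?_⟩
  · simp only [H]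
    gcongr
    exact hbr.sum_le_tsum _ fun n _ => mul_nonneg (hb n) (pow_nonneg hr n)
  have hn2 : 2 ≤ n := by have : 0 < n₀ := Nat.cast_pos.1 hn₀pos; omega
  exact mul_pow_le_of_le_add_quadConv hb (hq n) (by positivity) hn2 (hrec n (by omega))
    (hw n hn2) (fun j hj hjn => (hwC n j hj hjn).trans (by gcongr)) hx hxR.le hxθ.le

theorem A_unbounded_general
    (s : ℤ)
    (p : ℕ → ℝ) (hp : ∀ k, 1 ≤ k → 0 ≤ p k)
    (ρ : ℝ≥0∞)
    (hρ : ρ = seriesRadius fun k => if k = 0 then 0 else p k / (Nat.factorial k))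
    (γ : ℕ → ℝ)
    (hγ : ∀ n, 1 ≤ n → γ n = p n +
      ∑ j ∈ Finset.Ico 1 n, ((|s| : ℝ) * j - (s.sign : ℝ)) * γ j * γ (n - j))
    (a : ℕ → ℝ) (ha : ∀ n, a n = if n = 0 then 0 else γ n / (Nat.factorial n))
    (ρa : ℝ≥0∞) (hρa : ρa = seriesRadius a)
    (h1 : ρa < ρ)
    (h2 : ρa < (ENNReal.ofReal ((|s| : ℝ) * a 1))⁻¹) :
    ∀ M : ℝ, ∃ x : ℝ, 0 < x ∧ ENNReal.ofReal x < ρa ∧ M < ∑' n, a n * x ^ n := by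
  set q : ℕ → ℝ := fun k => if k = 0 then 0 else p k / (Nat.factorial k)
  have hq : ∀ n, 0 ≤ q n := fun n => by
    simp only [q]
    split_ifs with hn
    exacts [le_rfl, div_nonneg (hp n (by omega)) (Nat.cast_nonneg _)]
  have hβ : |(s.sign : ℝ)| ≤ |(s : ℝ)| := by exact_mod_cast Int.abs_sign_le_abs s
  have hrec : ∀ n, 1 ≤ n → a n = q n + quadConv (recWeight |(s : ℝ)| s.sign) a n :=
    fun n hn => by simpa [q, show n ≠ 0 by omega] using coeff_eq_add_quadConv hγ ha hn
  have ha_nonneg : ∀ n, 0 ≤ a n := nonneg_of_eq_add_quadConv hq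
    (fun n j hj => recWeight_nonneg hβ hj) (by simp [ha]) hrec
  have habs : ∀ n, |a n| = a n := fun n => abs_of_nonneg (ha_nonneg n)
  intro M
  by_contra! hbdd
  set r := ρa.toReal
  have hr : 0 ≤ r := ENNReal.toReal_nonneg
  have hlt : ∀ {x}, 0 ≤ x → (ENNReal.ofReal x < ρa ↔ x < r) := fun hx =>
    ENNReal.ofReal_lt_iff_lt_toReal hx h1.ne_top
  have hρa_eq : ENNReal.ofReal r = ρa := ENNReal.ofReal_toReal h1.ne_top
  have hsum_r : Summable fun n => a n * r ^ n := summable_mul_pow_of_tsum_le ha_nonneg hr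
    (fun x hx hxr => (summable_of_lt_seriesRadius hx.le (hρa ▸ (hlt hx.le).2 hxr)).congr
      fun n => by rw [habs])
    fun x hx hxr => hbdd x hx ((hlt hx.le).2 hxr)
  obtain ⟨R, hrR, hqR⟩ := exists_gt_summable_of_lt_seriesRadius (hρa_eq.trans_lt (hρ ▸ h1))
  obtain ⟨x, hrx, hx⟩ := exists_gt_summable_mul_pow (abs_nonneg _) (by positivity)
    (fun n hn => recWeight_sub_one_le hβ hn) (fun n j => recWeight_le_two_mul_div hβ) hq
    ha_nonneg (fun n hn => (hrec n hn).le) hr hrR hsum_r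
    (hqR.congr fun n => by rw [abs_of_nonneg (hq n)])
    (mul_lt_one_of_ofReal_lt_inv hr (hρa_eq.trans_lt h2))
  have hxρa := ofReal_le_seriesRadius (hr.trans hrx.le) (hx.congr fun n => by rw [habs])
  rw [← hρa, ← hρa_eq, ENNReal.ofReal_le_ofReal_iff hr] at hxρa
  exact hrx.not_ge hxρa

/-- If `ρ_a < ρ` and `ρ_a < 1/(|s|·a_1)`, then `A` is unbounded on `(0, ρ_a)`:
for every real `M` there is `x` with `0 < x < ρ_a` and `A(x) > M`. -/
theorem A_unbounded
    (s : ℤ) (hs : s ≠ 0)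
    (p : ℕ → ℝ) (hp : ∀ k, 1 ≤ k → 0 ≤ p k)
    (ρ : ℝ≥0∞)
    (hρ : ρ = seriesRadius fun k => if k = 0 then 0 else p k / (Nat.factorial k))
    (hρ0 : 0 < ρ)
    (hf : ∃ k, 1 ≤ k ∧ p k ≠ 0)
    (γ : ℕ → ℝ)
    (hγ : ∀ n, 1 ≤ n → γ n = p n +
      ∑ j ∈ Finset.Ico 1 n, ((|s| : ℝ) * j - (s.sign : ℝ)) * γ j * γ (n - j))
    (a : ℕ → ℝ) (ha : ∀ n, a n = if n = 0 then 0 else γ n / (Nat.factorial n))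
    (ρa : ℝ≥0∞) (hρa : ρa = seriesRadius a)
    (h1 : ρa < ρ)
    (h2 : ρa < (ENNReal.ofReal ((|s| : ℝ) * a 1))⁻¹) :
    ∀ M : ℝ, ∃ x : ℝ, 0 < x ∧ ENNReal.ofReal x < ρa ∧ M < ∑' n, a n * x ^ n :=
  A_unbounded_general s p hp ρ hρ γ hγ a ha ρa hρa h1 h2
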